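/- Let N ≥ 1 be an integer, let τ > 0, let t_0, …, t_N be N+1 pairwise distinct points in [0, τ], and let 𝔐 be the (N+1)×(N+1) matrix with entries 𝔐_{ij} = b_{i,N}(t_j/τ). Let C ⊆ ℝ^n be a convex set, let p : ℝ → ℝ^n have all coordinates polynomial of degree at most N, and let W ∈ ℝ^{n×(N+1)} be the matrix whose j-th column is p(t_j). If every column of W · 𝔐^{-1} belongs to C, then p(t) ∈ C for all t ∈ [0, τ]. -/

import Mathlib

/-- The Bernstein basis polynomial `b_{j,N}(x) = (N choose j) x^j (1-x)^(N-j)`. -/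
noncomputable def bern (N j : ℕ) (x : ℝ) : ℝ :=
  (N.choose j : ℝ) * x ^ j * (1 - x) ^ (N - j)

/-!
The Bernstein polynomials `b_{0,N}, …, b_{N,N}` are linearly independent, so the matrix `𝔐` of
their values at `N + 1` distinct nodes is invertible, and every polynomial `q` of degree at most
`N` is the Bernstein combination whose coefficient row is `(q(x_0), …, q(x_N)) 𝔐⁻¹`. Applied to
each coordinate of `s ↦ p(τ s)`, this writes `p(τ s)` as `∑ᵢ b_{i,N}(s) cᵢ`, where `cᵢ` is the
`i`-th column of `W 𝔐⁻¹`. On `[0, 1]` the Bernstein values are nonnegative and sum to one, so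
`p(τ s)` is a convex combination of points of `C`.
-/

open Polynomial Matrix

theorem natDegree_bernsteinPolynomial_le (R : Type*) [CommRing R] (n ν : ℕ) :
    (bernsteinPolynomial R n ν).natDegree ≤ n := by
  rcases le_or_gt ν n with h | h
  · unfold bernsteinPolynomial
    compute_degree
    omega
  · simp [bernsteinPolynomial.eq_zero_of_lt R h]

theorem bernsteinPolynomial_mem_degreeLT (R : Type*) [CommRing R] (n ν : ℕ) :
    bernsteinPolynomial R n ν ∈ degreeLT R (n + 1) :=
  mem_degreeLT.mpr <| (degree_le_of_natDegree_le (natDegree_bernsteinPolynomial_le R n ν)).trans_lt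
    (by exact_mod_cast n.lt_succ_self)

/-- Mathlib proves independence over `ℚ`. Restricted to the first `n + 1` coefficients the
polynomials become vectors in `Fin (n + 1) → ℚ`, and independence of such vectors survives the
base change `ℚ → K`. -/
theorem bernsteinPolynomial.linearIndependent_of_charZero (K : Type*) [Field K] [CharZero K]
    (n : ℕ) : LinearIndependent K fun ν : Fin (n + 1) => bernsteinPolynomial K n ν := by
  have hℚ : LinearIndependent ℚ
      ((LinearMap.pi fun k : Fin (n + 1) => lcoeff ℚ k) ∘ fun ν : Fin (n + 1) =>
        bernsteinPolynomial ℚ n ν) := by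
    refine (bernsteinPolynomial.linearIndependent n).map ?_
    rw [Submodule.disjoint_def]
    intro f hf hker
    have hdeg : f ∈ degreeLT ℚ (n + 1) := Submodule.span_le.mpr
      (Set.range_subset_iff.mpr fun ν : Fin (n + 1) => bernsteinPolynomial_mem_degreeLT ℚ n ν) hf
    refine (degreeLTEquiv_eq_zero_iff_eq_zero hdeg).mp (funext fun k => ?_)
    exact congr_fun (LinearMap.mem_ker.mp hker) k
  refine LinearIndependent.of_comp (LinearMap.pi fun k : Fin (n + 1) => lcoeff K k) ?_
  have hcoeff : ((LinearMap.pi fun k : Fin (n + 1) => lcoeff K k) ∘ fun ν : Fin (n + 1) =>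
      bernsteinPolynomial K n ν) = fun ν => algebraMap ℚ K ∘
        ((LinearMap.pi fun k : Fin (n + 1) => lcoeff ℚ k) ∘ fun ν : Fin (n + 1) =>
          bernsteinPolynomial ℚ n ν) ν := by
    ext ν k
    simp [← bernsteinPolynomial.map (algebraMap ℚ K) n ν, -bernsteinPolynomial.map]
  rw [hcoeff]
  exact linearIndependent_algebraMap_comp_iff.mpr hℚ

noncomputable def bernsteinMatrix {K : Type*} [CommRing K] (N : ℕ) (x : Fin (N + 1) → K) :
    Matrix (Fin (N + 1)) (Fin (N + 1)) K :=
  Matrix.of fun i j => (bernsteinPolynomial K N i).eval (x j)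

section BernsteinMatrix

variable {K : Type*} [Field K] {N : ℕ}

theorem natDegree_sum_smul_bernsteinPolynomial_le (c : Fin (N + 1) → K) :
    (∑ i, c i • bernsteinPolynomial K N i).natDegree ≤ N :=
  natDegree_sum_le_of_forall_le _ _ fun i _ =>
    (natDegree_smul_le _ _).trans (natDegree_bernsteinPolynomial_le K N i)

theorem eval_sum_smul_bernsteinPolynomial (c x : Fin (N + 1) → K) (j : Fin (N + 1)) :
    (∑ i, c i • bernsteinPolynomial K N i).eval (x j) = (c ᵥ* bernsteinMatrix N x) j := by
  simp [bernsteinMatrix, vecMul, dotProduct, eval_finsetSum]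

theorem isUnit_det_bernsteinMatrix [CharZero K] {x : Fin (N + 1) → K}
    (hx : Function.Injective x) : IsUnit (bernsteinMatrix N x).det := by
  rw [isUnit_iff_ne_zero, Ne, ← exists_vecMul_eq_zero_iff]
  rintro ⟨c, hc, hcM⟩
  have hzero : ∑ i, c i • bernsteinPolynomial K N i = 0 := by
    refine eq_zero_of_natDegree_lt_card_of_eval_eq_zero _ hx (fun j => ?_) ?_
    · rw [eval_sum_smul_bernsteinPolynomial, hcM, Pi.zero_apply]
    · simpa using Nat.lt_succ_of_le (natDegree_sum_smul_bernsteinPolynomial_le c)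
  exact hc (funext ((Fintype.linearIndependent_iff.mp
    (bernsteinPolynomial.linearIndependent_of_charZero K N)) c hzero))

theorem eq_sum_smul_bernsteinPolynomial [CharZero K] {x : Fin (N + 1) → K}
    (hx : Function.Injective x) {q : K[X]} (hq : q.natDegree ≤ N) :
    q = ∑ i, ((fun j => q.eval (x j)) ᵥ* (bernsteinMatrix N x)⁻¹) i •
      bernsteinPolynomial K N i := by
  refine eq_of_natDegree_lt_card_of_eval_eq _ _ hx (fun j => ?_) ?_
  · rw [eval_sum_smul_bernsteinPolynomial, vecMul_vecMul,
      nonsing_inv_mul _ (isUnit_det_bernsteinMatrix hx), vecMul_one]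
  · simpa using Nat.lt_succ_of_le (max_le hq (natDegree_sum_smul_bernsteinPolynomial_le _))

end BernsteinMatrix

theorem bern_eq_eval (N j : ℕ) (x : ℝ) : bern N j x = (bernsteinPolynomial ℝ N j).eval x := by
  simp [bern, bernsteinPolynomial]

theorem sum_bern (N : ℕ) (x : ℝ) : ∑ j : Fin (N + 1), bern N j x = 1 := by
  rw [Fin.sum_univ_eq_sum_range (fun j => bern N j x)]
  simpa [bern_eq_eval, eval_finsetSum] using congr_arg (eval x) (bernsteinPolynomial.sum ℝ N)

theorem bern_nonneg (N j : ℕ) {x : ℝ} (hx : x ∈ Set.Icc (0 : ℝ) 1) : 0 ≤ bern N j x := by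
  have hx₀ : 0 ≤ x := hx.1
  have hx₁ : 0 ≤ 1 - x := sub_nonneg.mpr hx.2
  unfold bern
  positivity

theorem Convex.sum_bern_smul_mem {E : Type*} [AddCommGroup E] [Module ℝ E] {C : Set E}
    (hC : Convex ℝ C) {N : ℕ} {c : Fin (N + 1) → E} (hc : ∀ i, c i ∈ C) {x : ℝ}
    (hx : x ∈ Set.Icc (0 : ℝ) 1) : ∑ i : Fin (N + 1), bern N i x • c i ∈ C :=
  hC.sum_mem (fun i _ => bern_nonneg N i hx) (sum_bern N x) fun i _ => hc i

theorem eval_mul_eq_sum_bern {N : ℕ} {τ : ℝ} (hτ : τ ≠ 0) {t : Fin (N + 1) → ℝ}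
    (ht : Function.Injective t) {q : ℝ[X]} (hq : q.natDegree ≤ N) (y : ℝ) :
    q.eval (τ * y) = ∑ i : Fin (N + 1),
      ((fun j => q.eval (t j)) ᵥ* (bernsteinMatrix N fun j => t j / τ)⁻¹) i * bern N i y := by
  have hx : Function.Injective fun j => t j / τ := fun a b hab => ht ((div_left_inj' hτ).mp hab)
  have hg : (q.comp (Polynomial.C τ * X)).natDegree ≤ N := by
    rwa [natDegree_comp, natDegree_C_mul_X τ hτ, mul_one]
  have hgt : (fun j => (q.comp (Polynomial.C τ * X)).eval (t j / τ)) = fun j => q.eval (t j) := by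
    simp [mul_div_cancel₀ _ hτ]
  calc q.eval (τ * y) = (q.comp (Polynomial.C τ * X)).eval y := by simp
    _ = _ := by
      rw [eq_sum_smul_bernsteinPolynomial hx hg, hgt]
      simp [eval_finsetSum, bern_eq_eval]

theorem mem_of_bernstein_control_points_mem_general
    (N n : ℕ) (τ : ℝ) (hτ : 0 < τ)
    (t : Fin (N + 1) → ℝ) (ht : Function.Injective t)
    (M : Matrix (Fin (N + 1)) (Fin (N + 1)) ℝ)
    (hM : ∀ i j, M i j = bern N i.val (t j / τ))
    (C : Set (Fin n → ℝ)) (hC : Convex ℝ C)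
    (p : ℝ → Fin n → ℝ)
    (hp : ∀ i : Fin n, ∃ q : Polynomial ℝ, q.degree ≤ N ∧ ∀ s : ℝ, p s i = q.eval s)
    (W : Matrix (Fin n) (Fin (N + 1)) ℝ)
    (hW : ∀ (r : Fin n) (j : Fin (N + 1)), W r j = p (t j) r)
    (hcol : ∀ j : Fin (N + 1), (fun r : Fin n => (W * M⁻¹) r j) ∈ C) :
    ∀ s ∈ Set.Icc (0 : ℝ) τ, p s ∈ C := by
  intro s hs
  have hM' : M = bernsteinMatrix N fun j => t j / τ := ext fun i j => by rw [hM, bern_eq_eval]; rfl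
  have hps : p s = ∑ i : Fin (N + 1), bern N i (s / τ) • fun r => (W * M⁻¹) r i := by
    ext r
    obtain ⟨q, hq, hpq⟩ := hp r
    have hWr : W r = fun j => q.eval (t j) := funext fun j => by rw [hW, hpq]
    conv_lhs => rw [hpq, ← mul_div_cancel₀ s hτ.ne']
    rw [eval_mul_eq_sum_bern hτ.ne' ht (natDegree_le_iff_degree_le.mpr hq)]
    simp [mul_apply_eq_vecMul, hWr, hM', mul_comm]
  rw [hps]
  exact hC.sum_bern_smul_mem hcol ⟨div_nonneg hs.1 hτ.le, div_le_one_of_le₀ hs.2 hτ.le⟩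

/-- With `𝔐 i j = b_{i,N}(t_j/τ)` for pairwise distinct nodes
`t_0, …, t_N ∈ [0,τ]`, let `C ⊆ ℝ^n` be convex, let `p : ℝ → ℝ^n` have polynomial
coordinates of degree at most `N`, and let `W` have `j`-th column `p(t_j)`. If every
column of `W ⬝ 𝔐⁻¹` belongs to `C`, then `p(t) ∈ C` for all `t ∈ [0, τ]`. -/
theorem mem_of_bernstein_control_points_mem
    (N n : ℕ) (hN : 1 ≤ N) (τ : ℝ) (hτ : 0 < τ)
    (t : Fin (N + 1) → ℝ) (ht : Function.Injective t)
    (htmem : ∀ j, t j ∈ Set.Icc (0 : ℝ) τ)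
    (M : Matrix (Fin (N + 1)) (Fin (N + 1)) ℝ)
    (hM : ∀ i j, M i j = bern N i.val (t j / τ))
    (C : Set (Fin n → ℝ)) (hC : Convex ℝ C)
    (p : ℝ → Fin n → ℝ)
    (hp : ∀ i : Fin n, ∃ q : Polynomial ℝ, q.degree ≤ N ∧ ∀ s : ℝ, p s i = q.eval s)
    (W : Matrix (Fin n) (Fin (N + 1)) ℝ)
    (hW : ∀ (r : Fin n) (j : Fin (N + 1)), W r j = p (t j) r)
    (hcol : ∀ j : Fin (N + 1), (fun r : Fin n => (W * M⁻¹) r j) ∈ C) :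
    ∀ s ∈ Set.Icc (0 : ℝ) τ, p s ∈ C :=
  mem_of_bernstein_control_points_mem_general N n τ hτ t ht M hM C hC p hp W hW hcol
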